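/- The first odd moment of log sine on [0, π/2]: ∫₀^{π/2} t · log(sin t) dt = (7/16) · ζ(3) − (π²/8) · log 2. -/

import Mathlib

/-!
For `|r| < 1`, taking real parts in `-log (1 - r e^{2it}) = ∑ rⁿ e^{2int} / n` gives
`log |1 - r e^{2it}|² = -2 ∑ rⁿ cos (2nt) / n`, and integrating against `t` over `[0, π/2]`
termwise gives `∑ (1 - (-1)ⁿ) / (2n³) · rⁿ`. As `r → 1⁻`, `|1 - r e^{2it}|² → 4 sin² t`:
dominated convergence (with majorant `π (log 2 - log sin t)`, integrable because `log ∘ sin` is)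
passes to the limit in the integral and Abel's theorem in the series, so
`2 ∫ t log (2 sin t) = ∑_{n odd} 1 / n³ = (7/8) ζ(3)`.
-/

open Real MeasureTheory

/-- The Riemann zeta value `ζ k = ∑_{m ≥ 1} 1 / m ^ k`. -/
noncomputable def zetaVal (k : ℕ) : ℝ := ∑' m : ℕ+, 1 / (m : ℝ) ^ k

open Filter Topology

lemma zetaVal_eq_tsum_nat {k : ℕ} (hk : k ≠ 0) : zetaVal k = ∑' n : ℕ, 1 / (n : ℝ) ^ k :=
  tsum_pnat_eq_tsum_of_eq_zero (f := fun n : ℕ => 1 / (n : ℝ) ^ k) (by simp [hk])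

lemma hasSum_one_div_odd_pow {k : ℕ} (hk : 1 < k) :
    HasSum (fun m : ℕ => 1 / ((2 * m + 1 : ℕ) : ℝ) ^ k) ((1 - 1 / 2 ^ k) * zetaVal k) := by
  have hall : HasSum (fun n : ℕ => 1 / (n : ℝ) ^ k) (zetaVal k) := by
    rw [zetaVal_eq_tsum_nat (by omega)]
    exact (Real.summable_one_div_nat_pow.mpr hk).hasSum
  have heven : HasSum (fun m : ℕ => 1 / ((2 * m : ℕ) : ℝ) ^ k) (1 / 2 ^ k * zetaVal k) :=
    (hall.mul_left (1 / 2 ^ k)).congr_fun fun m => by push_cast; rw [mul_pow]; ring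
  obtain ⟨s, hodd⟩ : Summable (fun m : ℕ => 1 / ((2 * m + 1 : ℕ) : ℝ) ^ k) :=
    hall.summable.comp_injective ((add_left_injective 1).comp (mul_right_injective₀ two_ne_zero))
  have hsplit : 1 / 2 ^ k * zetaVal k + s = zetaVal k :=
    (heven.even_add_odd (f := fun n : ℕ => 1 / (n : ℝ) ^ k) hodd).unique hall
  rwa [show s = (1 - 1 / 2 ^ k) * zetaVal k by linarith] at hodd

lemma hasSum_one_sub_neg_one_pow_div {k : ℕ} (hk : 1 < k) :
    HasSum (fun n : ℕ => (1 - (-1) ^ n) / (2 * (n : ℝ) ^ k)) ((1 - 1 / 2 ^ k) * zetaVal k) := by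
  have heven : HasSum (fun m : ℕ => (1 - (-1) ^ (2 * m)) / (2 * ((2 * m : ℕ) : ℝ) ^ k)) 0 := by
    simp only [pow_mul, neg_one_sq, one_pow, sub_self, zero_div]
    exact hasSum_zero
  have hodd : HasSum (fun m : ℕ => (1 - (-1) ^ (2 * m + 1)) / (2 * ((2 * m + 1 : ℕ) : ℝ) ^ k))
      ((1 - 1 / 2 ^ k) * zetaVal k) :=
    (hasSum_one_div_odd_pow hk).congr_fun fun m => by
      rw [pow_succ, pow_mul, neg_one_sq, one_pow]
      ring
  simpa using heven.even_add_odd (f := fun n : ℕ => (1 - (-1) ^ n) / (2 * (n : ℝ) ^ k)) hodd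

lemma integral_mul_cos_mul {c : ℝ} (hc : c ≠ 0) (a b : ℝ) :
    ∫ t in a..b, t * cos (c * t) =
      (b * sin (c * b) - a * sin (c * a)) / c + (cos (c * b) - cos (c * a)) / c ^ 2 := by
  have hderiv : ∀ t ∈ Set.uIcc a b,
      HasDerivAt (fun t => t * sin (c * t) / c + cos (c * t) / c ^ 2) (t * cos (c * t)) t := by
    intro t _
    have hlin : HasDerivAt (fun t => c * t) c t := by simpa using (hasDerivAt_id t).const_mul c
    have h := (((hasDerivAt_id' t).mul hlin.sin).div_const c).add (hlin.cos.div_const (c ^ 2))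
    exact h.congr_deriv (by field_simp; ring)
  rw [intervalIntegral.integral_eq_sub_of_hasDerivAt hderiv
    (Continuous.intervalIntegrable (by fun_prop) _ _)]
  ring

lemma integral_mul_cos_two_mul_nat {n : ℕ} (hn : n ≠ 0) :
    ∫ t in (0 : ℝ)..(π / 2), t * cos (2 * n * t) = ((-1) ^ n - 1) / (4 * (n : ℝ) ^ 2) := by
  have hend : 2 * (n : ℝ) * (π / 2) = n * π := by ring
  rw [integral_mul_cos_mul (by positivity), hend, sin_nat_mul_pi, cos_nat_mul_pi]
  simp only [mul_zero, sin_zero, sub_self, zero_div, cos_zero, zero_add]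
  ring

noncomputable def poissonDenom (r θ : ℝ) : ℝ := 1 - 2 * r * cos θ + r ^ 2

lemma normSq_one_sub_mul_exp (r θ : ℝ) :
    Complex.normSq (1 - r * Complex.exp (θ * Complex.I)) = poissonDenom r θ := by
  simp only [poissonDenom, Complex.normSq_apply, Complex.sub_re, Complex.sub_im, Complex.one_re,
    Complex.one_im, Complex.re_ofReal_mul, Complex.im_ofReal_mul, Complex.exp_ofReal_mul_I_re,
    Complex.exp_ofReal_mul_I_im]
  linear_combination r ^ 2 * sin_sq_add_cos_sq θ

lemma poissonDenom_two_mul (r t : ℝ) :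
    poissonDenom r (2 * t) = (1 - r) ^ 2 + 4 * r * sin t ^ 2 := by
  rw [poissonDenom, cos_two_mul, cos_sq']
  ring

lemma hasSum_pow_mul_cos_div {r : ℝ} (hr : |r| < 1) (θ : ℝ) :
    HasSum (fun n : ℕ => r ^ n * cos (n * θ) / n) (-log (poissonDenom r θ) / 2) := by
  set z : ℂ := r * Complex.exp (θ * Complex.I)
  have hz : ‖z‖ < 1 := by simpa [z, Complex.norm_exp_ofReal_mul_I] using hr
  have hre : (-Complex.log (1 - z)).re = -log (poissonDenom r θ) / 2 := by
    rw [Complex.neg_re, Complex.log_re, Complex.norm_def, normSq_one_sub_mul_exp,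
      log_sqrt (by rw [← normSq_one_sub_mul_exp]; exact Complex.normSq_nonneg _)]
    ring
  rw [← hre]
  refine (Complex.hasSum_re (Complex.hasSum_taylorSeries_neg_log hz)).congr_fun fun n => ?_
  have hpow : z ^ n / n = ((r ^ n / n : ℝ) : ℂ) * Complex.exp ((n * θ : ℝ) * Complex.I) := by
    rw [mul_pow, ← Complex.exp_nat_mul]
    push_cast
    ring_nf
  rw [hpow, Complex.re_ofReal_mul, Complex.exp_ofReal_mul_I_re]
  ring

lemma abs_pow_mul_cos_div_le (r x : ℝ) (n : ℕ) : |r ^ n * cos x / n| ≤ |r| ^ n := by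
  rcases eq_or_ne n 0 with rfl | hn
  · simp
  have hn1 : (1 : ℝ) ≤ n := by exact_mod_cast Nat.one_le_iff_ne_zero.mpr hn
  rw [abs_div, abs_mul, abs_pow, Nat.abs_cast]
  calc |r| ^ n * |cos x| / n ≤ |r| ^ n * 1 / 1 := by gcongr; exact abs_cos_le_one x
    _ = |r| ^ n := by ring

lemma integral_mul_pow_mul_cos_div (r : ℝ) (n : ℕ) :
    ∫ t in (0 : ℝ)..(π / 2), t * (-2 * (r ^ n * cos (n * (2 * t)) / n)) =
      (1 - (-1) ^ n) / (2 * (n : ℝ) ^ 3) * r ^ n := by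
  rcases eq_or_ne n 0 with rfl | hn
  · simp
  have hrw : ∀ t : ℝ, t * (-2 * (r ^ n * cos (n * (2 * t)) / n)) =
      -2 * r ^ n / n * (t * cos (2 * n * t)) := fun t => by
    rw [show (n : ℝ) * (2 * t) = 2 * n * t by ring]; ring
  simp_rw [hrw, intervalIntegral.integral_const_mul, integral_mul_cos_two_mul_nat hn]
  field_simp
  ring

lemma hasSum_integral_mul_log_poissonDenom {r : ℝ} (hr : |r| < 1) :
    HasSum (fun n : ℕ => (1 - (-1) ^ n) / (2 * (n : ℝ) ^ 3) * r ^ n)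
      (∫ t in (0 : ℝ)..(π / 2), t * log (poissonDenom r (2 * t))) := by
  refine (funext (integral_mul_pow_mul_cos_div r)) ▸
    intervalIntegral.hasSum_integral_of_dominated_convergence (fun n _ => π * |r| ^ n)
      (fun n => by fun_prop) (fun n => .of_forall fun t ht => ?_)
      (.of_forall fun t _ => (summable_geometric_of_lt_one (abs_nonneg r) hr).mul_left π)
      intervalIntegrable_const (.of_forall fun t _ => ?_)
  · rw [Set.uIoc_of_le (by positivity)] at ht
    calc ‖t * (-2 * (r ^ n * cos (n * (2 * t)) / n))‖
        = 2 * t * |r ^ n * cos (n * (2 * t)) / n| := by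
          rw [norm_mul, norm_mul, Real.norm_of_nonneg ht.1.le, norm_neg, Real.norm_two,
            Real.norm_eq_abs]
          ring
      _ ≤ 2 * (π / 2) * |r| ^ n := by
          gcongr
          exacts [ht.2, abs_pow_mul_cos_div_le _ _ _]
      _ = π * |r| ^ n := by ring
  · have h := ((hasSum_pow_mul_cos_div hr (2 * t)).mul_left (-2)).mul_left t
    rwa [show -2 * (-log (poissonDenom r (2 * t)) / 2) = log (poissonDenom r (2 * t)) by ring]
      at h

lemma abs_log_poissonDenom_two_mul_le {r t : ℝ} (hr₀ : 1 / 4 ≤ r) (hr₁ : r ≤ 1)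
    (ht : 0 < sin t) : |log (poissonDenom r (2 * t))| ≤ 2 * (log 2 - log (sin t)) := by
  have hsq := sin_sq_le_one t
  have hlower : sin t ^ 2 ≤ poissonDenom r (2 * t) := by
    rw [poissonDenom_two_mul]; nlinarith
  have hupper : poissonDenom r (2 * t) ≤ 2 ^ 2 := by
    rw [poissonDenom_two_mul]; nlinarith
  have hlog_lower : 2 * log (sin t) ≤ log (poissonDenom r (2 * t)) := by
    simpa [log_pow] using log_le_log (by positivity) hlower
  have hlog_upper : log (poissonDenom r (2 * t)) ≤ 2 * log 2 := by
    simpa [log_pow] using log_le_log ((pow_pos ht 2).trans_le hlower) hupper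
  have hlog_sin : log (sin t) ≤ 0 := log_nonpos ht.le (sin_le_one t)
  have hlog_two : 0 ≤ log 2 := log_nonneg one_le_two
  rw [abs_le]
  constructor <;> linarith

lemma tendsto_integral_mul_log_poissonDenom :
    Tendsto (fun r => ∫ t in (0 : ℝ)..(π / 2), t * log (poissonDenom r (2 * t))) (𝓝[<] 1)
      (𝓝 (∫ t in (0 : ℝ)..(π / 2), t * log (poissonDenom 1 (2 * t)))) := by
  have hcont (t : ℝ) : Continuous fun r => poissonDenom r (2 * t) := by
    unfold poissonDenom; fun_prop
  refine intervalIntegral.tendsto_integral_filter_of_dominated_convergence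
    (fun t => π * (log 2 - log (sin t))) (.of_forall fun r => ?_) ?_
    ((intervalIntegrable_const.sub (intervalIntegrable_log_sin (a := 0) (b := π / 2))).const_mul π)
    (.of_forall fun t ht => ?_)
  · exact (by unfold poissonDenom; fun_prop :
      Measurable fun t => t * log (poissonDenom r (2 * t))).aestronglyMeasurable
  · filter_upwards [Ioo_mem_nhdsLT (show (1 / 4 : ℝ) < 1 by norm_num)] with r hr
    refine .of_forall fun t ht => ?_
    rw [Set.uIoc_of_le (by positivity)] at ht
    have hsin : 0 < sin t := sin_pos_of_pos_of_lt_pi ht.1 (by linarith [ht.2, pi_pos])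
    calc ‖t * log (poissonDenom r (2 * t))‖ = t * |log (poissonDenom r (2 * t))| := by
          rw [norm_mul, Real.norm_of_nonneg ht.1.le, Real.norm_eq_abs]
      _ ≤ (π / 2) * (2 * (log 2 - log (sin t))) := by
          gcongr
          exacts [ht.2, abs_log_poissonDenom_two_mul_le hr.1.le hr.2.le hsin]
      _ = π * (log 2 - log (sin t)) := by ring
  · rw [Set.uIoc_of_le (by positivity)] at ht
    have hsin : 0 < sin t := sin_pos_of_pos_of_lt_pi ht.1 (by linarith [ht.2, pi_pos])
    have hP : poissonDenom 1 (2 * t) ≠ 0 := by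
      rw [poissonDenom_two_mul]; positivity
    exact (continuousAt_const.mul ((hcont t).continuousAt.log hP)).tendsto.mono_left
      nhdsWithin_le_nhds

lemma integral_mul_log_two_mul_sin :
    ∫ t in (0 : ℝ)..(π / 2), t * log (2 * sin t) = 7 / 16 * zetaVal 3 := by
  have habel := Real.tendsto_tsum_powerSeries_nhdsWithin_lt
    (hasSum_one_sub_neg_one_pow_div (k := 3) (by norm_num)).tendsto_sum_nat
  have hseries : (fun r : ℝ => ∑' n : ℕ, (1 - (-1) ^ n) / (2 * (n : ℝ) ^ 3) * r ^ n) =ᶠ[𝓝[<] 1]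
      fun r => ∫ t in (0 : ℝ)..(π / 2), t * log (poissonDenom r (2 * t)) := by
    filter_upwards [Ioo_mem_nhdsLT (show (-1 : ℝ) < 1 by norm_num)] with r hr
    exact (hasSum_integral_mul_log_poissonDenom (abs_lt.mpr hr)).tsum_eq
  have hlim := tendsto_nhds_unique (habel.congr' hseries) tendsto_integral_mul_log_poissonDenom
  have hboundary : ∫ t in (0 : ℝ)..(π / 2), t * log (poissonDenom 1 (2 * t)) =
      2 * ∫ t in (0 : ℝ)..(π / 2), t * log (2 * sin t) := by
    rw [← intervalIntegral.integral_const_mul]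
    refine intervalIntegral.integral_congr fun t _ => ?_
    rw [poissonDenom_two_mul, show (1 - 1 : ℝ) ^ 2 + 4 * 1 * sin t ^ 2 = (2 * sin t) ^ 2 by ring,
      log_pow]
    push_cast
    ring
  linarith

theorem first_odd_logsine_moment :
    ∫ t in (0:ℝ)..(π / 2), t * Real.log (Real.sin t) =
      7 / 16 * zetaVal 3 - π ^ 2 / 8 * Real.log 2 := by
  have hsplit : ∫ t in (0 : ℝ)..(π / 2), t * log (2 * sin t) =
      (∫ t in (0 : ℝ)..(π / 2), t * log 2) + ∫ t in (0 : ℝ)..(π / 2), t * log (sin t) := by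
    have hint : IntervalIntegrable (fun t => t * log (sin t)) volume 0 (π / 2) :=
      intervalIntegrable_log_sin.continuousOn_mul continuousOn_id
    rw [← intervalIntegral.integral_add (intervalIntegral.intervalIntegrable_id.mul_const _) hint]
    refine intervalIntegral.integral_congr fun t ht => ?_
    rcases eq_or_ne t 0 with rfl | ht₀
    · simp
    rw [Set.uIcc_of_le (by positivity)] at ht
    have hsin : 0 < sin t :=
      sin_pos_of_pos_of_lt_pi (ht.1.lt_of_ne' ht₀) (by linarith [ht.2, pi_pos])
    simp only [log_mul two_ne_zero hsin.ne', mul_add]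
  have hlog_two : ∫ t in (0 : ℝ)..(π / 2), t * log 2 = π ^ 2 / 8 * log 2 := by
    rw [intervalIntegral.integral_mul_const, integral_id]
    ring
  rw [integral_mul_log_two_mul_sin, hlog_two] at hsplit
  linarith
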